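/- arXiv:1509.02348 — 5 statements merged into one kernel-verified Lean document; each statement's English description precedes it below -/
import Mathlib

section
/- If a multiset S = {s_1, ..., s_d} of positive integers admits a partition into two multisubsets with equal sums, then there exist vectors w ∈ ℚ^{d+1}, h ∈ ℚ^d and b ∈ ℚ such that the piecewise affine model x ↦ wᵀ[x;1] (using w if sign(hᵀx + b) = +1 and -w otherwise) exactly fits the 2d+3 data points (s_i e_i, s_i) for i = 1..d, (-s_i e_i, s_i) for i = 1..d, (s, 0), (-s, 0), and (0, 0), where e_i is the i-th standard basis vector and s = Σ_i s_i e_i. -/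
/-- If a multiset of d positive integers admits an equal-sum partition, then
the reduction instance is exactly fit by a PWA model with w_{-1} = -w_1. -/
theorem stmt0 (d : ℕ) (hd : 0 < d) (s : Fin d → ℤ) (hs : ∀ i, 0 < s i)
    (hpart : ∃ I : Finset (Fin d), ∑ i ∈ I, s i = ∑ i ∈ Iᶜ, s i) :
    ∃ (w : Fin d → ℚ) (w0 : ℚ) (h : Fin d → ℚ) (b : ℚ),
      ∀ (x : Fin d → ℚ) (y : ℚ),
        ((∃ i : Fin d, x = (fun j => if j = i then (s i : ℚ) else 0) ∧ y = (s i : ℚ)) ∨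
         (∃ i : Fin d, x = (fun j => if j = i then -(s i : ℚ) else 0) ∧ y = (s i : ℚ)) ∨
         (x = (fun j => (s j : ℚ)) ∧ y = 0) ∨
         (x = (fun j => -(s j : ℚ)) ∧ y = 0) ∨
         (x = 0 ∧ y = 0)) →
        (if 0 ≤ (∑ j, h j * x j) + b then (∑ j, w j * x j) + w0
         else -((∑ j, w j * x j) + w0)) = y := by
  obtain ⟨I, hI⟩ := hpart
  refine ⟨fun j => if j ∈ I then 1 else -1, 0, fun j => if j ∈ I then 1 else -1, 0, ?_⟩
  have hsum : ∑ j, (if j ∈ I then (1:ℚ) else -1) * (s j : ℚ) = 0 := by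
    rw [← Finset.sum_add_sum_compl I]
    have h1 : ∑ j ∈ I, (if j ∈ I then (1:ℚ) else -1) * (s j : ℚ) = ∑ j ∈ I, (s j : ℚ) :=
      Finset.sum_congr rfl fun j hj => by simp [hj]
    have h2 : ∑ j ∈ Iᶜ, (if j ∈ I then (1:ℚ) else -1) * (s j : ℚ) = -∑ j ∈ Iᶜ, (s j : ℚ) := by
      rw [← Finset.sum_neg_distrib]
      exact Finset.sum_congr rfl fun j hj => by
        simp [Finset.mem_compl.mp hj]
    rw [h1, h2]
    have : (∑ i ∈ I, (s i : ℚ)) = ∑ i ∈ Iᶜ, (s i : ℚ) := by exact_mod_cast congrArg (Int.cast : ℤ → ℚ) hI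
    rw [this]; ring
  intro x y hxy
  have hsi : ∀ i : Fin d, (0:ℚ) < (s i : ℚ) := fun i => by exact_mod_cast hs i
  rcases hxy with ⟨i, hx, hy⟩ | ⟨i, hx, hy⟩ | ⟨hx, hy⟩ | ⟨hx, hy⟩ | ⟨hx, hy⟩
  · subst hx; subst hy
    simp only [mul_ite, mul_zero, Finset.sum_ite_eq', Finset.mem_univ, if_true, add_zero]
    by_cases hi : i ∈ I
    · simp [hi, le_of_lt (hsi i)]
    · simp only [hi, if_false, neg_one_mul]
      rw [if_neg (by linarith [hsi i])]
      ring
  · subst hx; subst hy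
    simp only [mul_ite, mul_zero, Finset.sum_ite_eq', Finset.mem_univ, if_true, add_zero]
    by_cases hi : i ∈ I
    · simp only [hi, if_true, one_mul]
      rw [if_neg (by linarith [hsi i])]
      ring
    · simp only [hi, if_false, neg_one_mul, neg_neg]
      rw [if_pos (by linarith [hsi i])]
  · subst hx; subst hy
    have key : (∑ x : Fin d, if x ∈ I then (s x : ℚ) else -(s x : ℚ)) = 0 := by
      simpa [ite_mul, one_mul, neg_one_mul] using hsum
    simp [key]
  · subst hx; subst hy
    have key : (∑ x : Fin d, if x ∈ I then (s x : ℚ) else -(s x : ℚ)) = 0 := by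
      simpa [ite_mul, one_mul, neg_one_mul] using hsum
    simp [key]
  · subst hx; subst hy
    simp
end

section
/- Let S = {s_1, ..., s_d} be positive integers and consider the 2d+3 data points (s_i e_i, s_i), (-s_i e_i, s_i) for i = 1..d, plus (s, 0), (-s, 0), (0, 0) with s = Σ s_i e_i. If there exist w_1, w_{-1} ∈ ℚ^{d+1} and an affine binary classifier h(x) = sign(hᵀx + b) such that w_{h(x_i)}ᵀ[x_i;1] = y_i for all data points, then S admits a partition into two multisubsets with equal sums. -/
lemma key_partition {d : ℕ} (s : Fin d → ℤ) (w : Fin d → ℚ) (I : Finset (Fin d))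
    (h1 : ∀ i ∈ I, w i = 1) (h2 : ∀ i ∈ Iᶜ, w i = -1)
    (h0 : (∑ j, w j * (s j : ℚ)) = 0) :
    ∑ i ∈ I, s i = ∑ i ∈ Iᶜ, s i := by
  have h0' : (∑ i ∈ I, (s i : ℚ)) + ∑ i ∈ Iᶜ, (-(s i : ℚ)) = 0 := by
    rw [← h0, ← Finset.sum_add_sum_compl I (fun j => w j * (s j : ℚ))]
    congr 1
    · exact (Finset.sum_congr rfl (fun i hi => by rw [h1 i hi, one_mul])).symm
    · exact (Finset.sum_congr rfl (fun i hi => by rw [h2 i hi, neg_one_mul])).symm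
  rw [Finset.sum_neg_distrib] at h0'
  have e : (∑ i ∈ I, (s i : ℚ)) = ∑ i ∈ Iᶜ, (s i : ℚ) := by linarith
  exact_mod_cast e

/-- If the reduction instance is exactly fit by a binary PWA model with an
affine classifier, then the positive integers admit an equal-sum partition. -/
theorem stmt1 (d : ℕ) (hd : 0 < d) (s : Fin d → ℤ) (hs : ∀ i, 0 < s i)
    (w1 wm1 : Fin d → ℚ) (w10 wm10 : ℚ) (h : Fin d → ℚ) (b : ℚ)
    (fit : ∀ (x : Fin d → ℚ) (y : ℚ),
        ((∃ i : Fin d, x = (fun j => if j = i then (s i : ℚ) else 0) ∧ y = (s i : ℚ)) ∨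
         (∃ i : Fin d, x = (fun j => if j = i then -(s i : ℚ) else 0) ∧ y = (s i : ℚ)) ∨
         (x = (fun j => (s j : ℚ)) ∧ y = 0) ∨
         (x = (fun j => -(s j : ℚ)) ∧ y = 0) ∨
         (x = 0 ∧ y = 0)) →
        (if 0 ≤ (∑ j, h j * x j) + b then (∑ j, w1 j * x j) + w10
         else (∑ j, wm1 j * x j) + wm10) = y) :
    ∃ I : Finset (Fin d), ∑ i ∈ I, s i = ∑ i ∈ Iᶜ, s i := by
  have f0 := fit 0 0 (Or.inr (Or.inr (Or.inr (Or.inr ⟨rfl, rfl⟩))))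
  simp at f0
  have fpi := fun i => fit _ _ (Or.inl ⟨i, rfl, rfl⟩)
  simp [mul_ite, Finset.sum_ite_eq'] at fpi
  have fmi := fun i => fit _ _ (Or.inr (Or.inl ⟨i, rfl, rfl⟩))
  simp [mul_ite, Finset.sum_ite_eq'] at fmi
  have fs := fit _ _ (Or.inr (Or.inr (Or.inl ⟨rfl, rfl⟩)))
  have fms := fit _ _ (Or.inr (Or.inr (Or.inr (Or.inl ⟨rfl, rfl⟩))))
  simp only [mul_neg, Finset.sum_neg_distrib] at fms
  have hsQ : ∀ i, (0:ℚ) < (s i : ℚ) := fun i => by exact_mod_cast hs i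
  rcases le_or_gt 0 b with hb | hb
  · -- origin in region +1, w10 = 0
    have hw10 : w10 = 0 := by simpa [hb] using f0
    refine ⟨Finset.univ.filter (fun i => 0 ≤ h i * (s i : ℚ)), key_partition s w1 _ ?_ ?_ ?_⟩
    · intro i hi
      simp only [Finset.mem_filter, Finset.mem_univ, true_and] at hi
      have hc : 0 ≤ h i * (s i : ℚ) + b := by linarith
      have := fpi i
      rw [if_pos hc, hw10, add_zero] at this
      exact mul_right_cancel₀ (ne_of_gt (hsQ i))
        (by rw [this, one_mul] : w1 i * (s i : ℚ) = 1 * (s i : ℚ))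
    · intro i hi
      simp only [Finset.mem_compl, Finset.mem_filter, Finset.mem_univ, true_and,
        not_le] at hi
      have hc : h i * (s i : ℚ) ≤ b := by linarith
      have := fmi i
      rw [if_pos hc, hw10, add_zero] at this
      have h2 : w1 i * (s i : ℚ) = (-1) * (s i : ℚ) := by linarith [this]
      exact mul_right_cancel₀ (ne_of_gt (hsQ i)) h2
    · rcases le_or_gt 0 ((∑ j, h j * (s j : ℚ)) + b) with hc | hc
      · rw [if_pos hc, hw10, add_zero] at fs
        exact fs
      · have hc' : 0 ≤ -(∑ j, h j * (s j : ℚ)) + b := by linarith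
        rw [if_pos hc', hw10, add_zero] at fms
        linarith [fms]
  · -- origin in region -1, wm10 = 0
    have hwm10 : wm10 = 0 := by simpa [not_le.mpr hb] using f0
    refine ⟨Finset.univ.filter (fun i => h i * (s i : ℚ) + b < 0),
      key_partition s wm1 _ ?_ ?_ ?_⟩
    · intro i hi
      simp only [Finset.mem_filter, Finset.mem_univ, true_and] at hi
      have := fpi i
      rw [if_neg (not_le.mpr hi), hwm10, add_zero] at this
      exact mul_right_cancel₀ (ne_of_gt (hsQ i))
        (by rw [this, one_mul] : wm1 i * (s i : ℚ) = 1 * (s i : ℚ))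
    · intro i hi
      simp only [Finset.mem_compl, Finset.mem_filter, Finset.mem_univ, true_and,
        not_lt] at hi
      have hc : ¬ (h i * (s i : ℚ) ≤ b) := by
        intro hle; linarith
      have := fmi i
      rw [if_neg hc, hwm10, add_zero] at this
      have h2 : wm1 i * (s i : ℚ) = (-1) * (s i : ℚ) := by linarith [this]
      exact mul_right_cancel₀ (ne_of_gt (hsQ i)) h2
    · rcases lt_or_ge ((∑ j, h j * (s j : ℚ)) + b) 0 with hc | hc
      · rw [if_neg (not_le.mpr hc), hwm10, add_zero] at fs
        exact fs
      · have hc' : ¬ (0 ≤ -(∑ j, h j * (s j : ℚ)) + b) := by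
          intro hle; linarith
        rw [if_neg hc', hwm10, add_zero] at fms
        linarith [fms]
end

section
/- In the reduction instance built from positive integers s_1, ..., s_d (data points x_i = s_i e_i, x_{i+d} = -s_i e_i, and x_{2d+3} = 0 with y_i = y_{i+d} = s_i and y_{2d+3} = 0), any affine binary classifier h(x) = sign(hᵀx + b) and parameter vectors achieving zero error must classify x_i and x_{i+d} into different classes for every i ≤ d. -/
/-- In the reduction instance, any affine classifier and parameters achieving
zero error must classify x_i = s_i e_i and x_{i+d} = -s_i e_i into different classes. -/
theorem stmt2 (d : ℕ) (s : Fin d → ℤ) (hs : ∀ i, 0 < s i)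
    (w1 wm1 : Fin d → ℚ) (w10 wm10 : ℚ) (h : Fin d → ℚ) (b : ℚ)
    (fit : ∀ (x : Fin d → ℚ) (y : ℚ),
        ((∃ i : Fin d, x = (fun j => if j = i then (s i : ℚ) else 0) ∧ y = (s i : ℚ)) ∨
         (∃ i : Fin d, x = (fun j => if j = i then -(s i : ℚ) else 0) ∧ y = (s i : ℚ)) ∨
         (x = 0 ∧ y = 0)) →
        (if 0 ≤ (∑ j, h j * x j) + b then (∑ j, w1 j * x j) + w10
         else (∑ j, wm1 j * x j) + wm10) = y) :
    ∀ i : Fin d,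
      ¬((0 ≤ (∑ j, h j * (if j = i then (s i : ℚ) else 0)) + b) ↔
        (0 ≤ (∑ j, h j * (if j = i then -(s i : ℚ) else 0)) + b)) := by
  intro i hiff
  have hx1 := fit (fun j => if j = i then (s i : ℚ) else 0) (s i) (Or.inl ⟨i, rfl, rfl⟩)
  have hx2 := fit (fun j => if j = i then -(s i : ℚ) else 0) (s i)
    (Or.inr (Or.inl ⟨i, rfl, rfl⟩))
  have hx0 := fit 0 0 (Or.inr (Or.inr ⟨rfl, rfl⟩))
  simp only [mul_ite, mul_zero, mul_neg, Finset.sum_ite_eq', Finset.mem_univ, if_true,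
    Pi.zero_apply, Finset.sum_const_zero, zero_add] at hx1 hx2 hx0 hiff
  have hsi : (0:ℚ) < s i := by exact_mod_cast hs i
  by_cases hc : 0 ≤ h i * s i + b
  · have hc2 : 0 ≤ -(h i * s i) + b := hiff.mp hc
    rw [if_pos hc] at hx1
    rw [if_pos hc2] at hx2
    have hb : 0 ≤ b := by nlinarith
    rw [if_pos hb] at hx0
    nlinarith
  · have hc2 : ¬ 0 ≤ -(h i * s i) + b := fun hh => hc (hiff.mpr hh)
    rw [if_neg hc] at hx1
    rw [if_neg hc2] at hx2
    have hb : ¬ 0 ≤ b := by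
      push_neg at hc hc2 ⊢; nlinarith
    rw [if_neg hb] at hx0
    nlinarith
end

section
/- For any affine hyperplane H = {x ∈ ℝ^d : hᵀx + b = 0} with h ≠ 0, and any finite set S of N > d points in general position, there exists a subset S_h ⊂ S with |S_h| = d and a hyperplane of parameters (h', b') with ‖h'‖ = 1 passing through all points of S_h, such that for every x ∈ S \ S_h, sign(hᵀx + b) = sign(h'ᵀx + b'). -/
open Classical in
/-- sign function: 1 if u ≥ 0, -1 otherwise. -/
noncomputable def sgnR (u : ℝ) : ℤ := if 0 ≤ u then 1 else -1

/-!
Write affine functionals as `w = (g, c) ∈ ℝ^d × ℝ` and start from `w = (h, b)`. As long as `w`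
vanishes at fewer than `d` of the points, the functionals vanishing at those points form a space
of dimension at least two, so it contains some `v` independent of `w`. Moving `w` along `v` until
it first vanishes at a new point (a ratio test) keeps its sign at every point where it does not
vanish and enlarges its zero set. General position caps the zero set at `d` points, so a
functional with exactly `d` zeros is reached; rescaling it gives a unit normal.
-/

open Module

section LinearOrder

variable {ι 𝕜 : Type*} [Zero 𝕜] [LinearOrder 𝕜]

def SignRefines (a b : ι → 𝕜) : Prop :=
  ∀ i, b i ≠ 0 → SignType.sign (b i) = SignType.sign (a i)

namespace SignRefines

theorem refl (a : ι → 𝕜) : SignRefines a a := fun _ _ => rfl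

theorem trans {a b c : ι → 𝕜} (hab : SignRefines a b) (hbc : SignRefines b c) :
    SignRefines a c := by
  intro i hc
  have hb : b i ≠ 0 := by
    rw [← sign_ne_zero, ← hbc i hc, sign_ne_zero]
    exact hc
  rw [hbc i hc, hab i hb]

theorem zeroSet_subset {a b : ι → 𝕜} (hab : SignRefines a b) :
    {i | a i = 0} ⊆ {i | b i = 0} := by
  intro i ha
  by_contra hb
  exact hb (sign_eq_zero_iff.mp ((hab i hb).trans (by simp [ha.out])))

end SignRefines

end LinearOrder

section LinearOrderedField

variable {ι 𝕜 : Type*} [Field 𝕜] [LinearOrder 𝕜] [IsStrictOrderedRing 𝕜]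

theorem sign_add_of_abs_le {a c : 𝕜} (hca : |c| ≤ |a|) (hac : a + c ≠ 0) :
    SignType.sign (a + c) = SignType.sign a := by
  rcases lt_trichotomy a 0 with ha | ha | ha
  · rw [abs_of_neg ha] at hca
    rw [sign_neg ha, sign_neg (lt_of_le_of_ne (by linarith [le_abs_self c]) hac)]
  · simp_all
  · rw [abs_of_pos ha] at hca
    rw [sign_pos ha, sign_pos (lt_of_le_of_ne (by linarith [neg_abs_le c]) hac.symm)]

theorem SignRefines.smul_of_pos {a b : ι → 𝕜} (hab : SignRefines a b) {c : 𝕜} (hc : 0 < c) :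
    SignRefines a (c • b) := by
  intro i hcb
  have hb : b i ≠ 0 := right_ne_zero_of_mul hcb
  rw [Pi.smul_apply, smul_eq_mul, sign_mul, sign_pos hc, one_mul, hab i hb]

theorem exists_signRefines_add_smul [Fintype ι] {a b : ι → 𝕜} (hab : ∀ i, a i = 0 → b i = 0)
    (hb : b ≠ 0) :
    ∃ t j, a j ≠ 0 ∧ a j + t * b j = 0 ∧ SignRefines a (a + t • b) := by
  obtain ⟨j, hbj, hmin⟩ := Finset.exists_min_image {i | b i ≠ 0} (fun i => |a i| / |b i|)
    (by simpa [Finset.Nonempty, funext_iff] using hb)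
  rw [Finset.mem_filter_univ] at hbj
  have haj : a j ≠ 0 := fun h => hbj (hab j h)
  -- the ratio test of the simplex method: stop at the first `j` where `a + t • b` vanishes
  refine ⟨-a j / b j, j, haj, by field_simp; ring, fun i hi => ?_⟩
  by_cases hbi : b i = 0
  · simp [hbi]
  · simp only [Pi.add_apply, Pi.smul_apply, smul_eq_mul] at hi ⊢
    refine sign_add_of_abs_le ?_ hi
    have := hmin i (by simpa using hbi)
    rw [abs_mul, abs_div, abs_neg]
    exact (le_div_iff₀ (abs_pos.mpr hbi)).mp this

end LinearOrderedField

theorem sgnR_eq_of_sign_eq {u v : ℝ} (h : SignType.sign u = SignType.sign v) :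
    sgnR u = sgnR v := by
  have : 0 ≤ u ↔ 0 ≤ v := by rw [← sign_nonneg_iff, h, sign_nonneg_iff]
  simp only [sgnR, this]

theorem LinearMap.exists_mem_ker_notMem_span_singleton {K V W : Type*} [Field K]
    [AddCommGroup V] [Module K V] [FiniteDimensional K V] [AddCommGroup W] [Module K W]
    [FiniteDimensional K W] (Φ : V →ₗ[K] W) (h : finrank K W + 1 < finrank K V) (w : V) :
    ∃ v ∈ LinearMap.ker Φ, v ∉ K ∙ w := by
  have hker : finrank K W + finrank K (LinearMap.ker Φ) ≥ finrank K V := by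
    have := Φ.finrank_range_add_finrank_ker
    have := Submodule.finrank_le (LinearMap.range Φ)
    omega
  have hspan : finrank K (K ∙ w) ≤ 1 := by
    simpa using finrank_span_le_card (R := K) ({w} : Set V)
  have : ¬ LinearMap.ker Φ ≤ K ∙ w := fun hle => by
    have := Submodule.finrank_mono hle
    omega
  exact SetLike.not_le_iff_exists.mp this

theorem exists_pos_sum_sq_smul_eq_one {κ : Type*} [Fintype κ] {g : κ → ℝ} (hg : g ≠ 0) :
    ∃ c : ℝ, 0 < c ∧ ∑ j, (c • g) j ^ 2 = 1 := by
  have hpos : 0 < ∑ j, g j ^ 2 := by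
    refine (Fintype.sum_nonneg fun j => sq_nonneg (g j)).lt_of_ne' ?_
    simpa [dotProduct, sq] using dotProduct_self_eq_zero.not.mpr hg
  refine ⟨(√(∑ j, g j ^ 2))⁻¹, by positivity, ?_⟩
  simp only [Pi.smul_apply, smul_eq_mul, mul_pow, ← Finset.mul_sum, inv_pow,
    Real.sq_sqrt hpos.le, inv_mul_cancel₀ hpos.ne']

section Hyperplane

variable {ι : Type*} {d : ℕ}

def affineEval (x : ι → Fin d → ℝ) : ((Fin d → ℝ) × ℝ) →ₗ[ℝ] ι → ℝ where
  toFun w i := w.1 ⬝ᵥ x i + w.2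
  map_add' v w := by
    ext i
    simp only [Prod.fst_add, Prod.snd_add, add_dotProduct, Pi.add_apply]
    ring
  map_smul' c w := by
    ext i
    simp only [Prod.smul_fst, Prod.smul_snd, smul_dotProduct, Pi.smul_apply, smul_eq_mul,
      RingHom.id_apply]
    ring

theorem affineEval_apply (x : ι → Fin d → ℝ) (w : (Fin d → ℝ) × ℝ) (i : ι) :
    affineEval x w i = w.1 ⬝ᵥ x i + w.2 :=
  rfl

def InGeneralPosition (x : ι → Fin d → ℝ) : Prop :=
  ∀ w : (Fin d → ℝ) × ℝ, w.1 ≠ 0 → {i | affineEval x w i = 0}.ncard ≤ d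

theorem fst_ne_zero_of_affineEval_eq_zero {x : ι → Fin d → ℝ} {w : (Fin d → ℝ) × ℝ}
    (hw : w ≠ 0) {i : ι} (hi : affineEval x w i = 0) : w.1 ≠ 0 := by
  intro h1
  simp only [affineEval_apply, h1, zero_dotProduct, zero_add] at hi
  exact hw (Prod.ext h1 hi)

namespace InGeneralPosition

variable [Fintype ι] {x : ι → Fin d → ℝ}

theorem affineEval_injective (hx : InGeneralPosition x) (hd : d < Fintype.card ι) :
    Function.Injective (affineEval x) := by
  refine (injective_iff_map_eq_zero _).mpr fun w hw => ?_
  by_cases h1 : w.1 = 0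
  · obtain ⟨i⟩ : Nonempty ι := Fintype.card_pos_iff.mp (by omega)
    have hi := congrFun hw i
    simp only [affineEval_apply, h1, zero_dotProduct, zero_add, Pi.zero_apply] at hi
    exact Prod.ext h1 hi
  · have := hx w h1
    simp only [hw, Pi.zero_apply, Set.ofPred_true, Set.ncard_univ, Nat.card_eq_fintype_card]
      at this
    omega

theorem exists_signRefines_ncard_lt (hx : InGeneralPosition x) (hd : d < Fintype.card ι)
    {w : (Fin d → ℝ) × ℝ} (hZ : {i | affineEval x w i = 0}.ncard < d) :
    ∃ w', w'.1 ≠ 0 ∧ SignRefines (affineEval x w) (affineEval x w') ∧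
      {i | affineEval x w i = 0}.ncard < {i | affineEval x w' i = 0}.ncard := by
  set Z := {i | affineEval x w i = 0}
  obtain ⟨v, hvZ, hvw⟩ :=
    (LinearMap.funLeft ℝ ℝ ((↑) : Z → ι) ∘ₗ affineEval x).exists_mem_ker_notMem_span_singleton
      (by rwa [finrank_fintype_fun_eq_card, Fintype.card_eq_nat_card, Nat.card_coe_set_eq,
        finrank_prod, finrank_fin_fun, finrank_self, add_lt_add_iff_right]) w
  have hv : affineEval x v ≠ 0 := by
    rw [ne_eq, ← map_zero (affineEval x), (hx.affineEval_injective hd).eq_iff]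
    rintro rfl
    exact hvw (zero_mem _)
  obtain ⟨t, j, hj, htj, href⟩ :=
    exists_signRefines_add_smul (fun i hi => congrFun (LinearMap.mem_ker.mp hvZ) ⟨i, hi⟩) hv
  rw [← map_smul, ← map_add] at href
  have hw' : w + t • v ≠ 0 := by
    intro h0
    have ht : t ≠ 0 := by
      rintro rfl
      simp only [zero_mul, add_zero] at htj
      exact hj htj
    apply hvw
    rw [Submodule.mem_span_singleton]
    refine ⟨-t⁻¹, ?_⟩
    rw [eq_neg_of_add_eq_zero_left h0]
    simp [smul_smul, ht]
  have hj' : affineEval x (w + t • v) j = 0 := by simpa using htj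
  refine ⟨w + t • v, fst_ne_zero_of_affineEval_eq_zero hw' hj', href, Set.ncard_lt_ncard ?_⟩
  exact (Set.ssubset_iff_of_subset href.zeroSet_subset).mpr ⟨j, hj', hj⟩

theorem exists_signRefines_ncard_eq (hx : InGeneralPosition x) (hd : d < Fintype.card ι)
    {w₀ : (Fin d → ℝ) × ℝ} (hw₀ : w₀.1 ≠ 0) :
    ∃ w : (Fin d → ℝ) × ℝ, w.1 ≠ 0 ∧ SignRefines (affineEval x w₀) (affineEval x w) ∧
      {i | affineEval x w i = 0}.ncard = d := by
  set S := {n | ∃ w : (Fin d → ℝ) × ℝ, w.1 ≠ 0 ∧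
    SignRefines (affineEval x w₀) (affineEval x w) ∧ {i | affineEval x w i = 0}.ncard = n}
  have hbdd : BddAbove S := ⟨d, by rintro _ ⟨w, hw, -, rfl⟩; exact hx w hw⟩
  have hne : S.Nonempty := ⟨_, w₀, hw₀, SignRefines.refl _, rfl⟩
  obtain ⟨w, hw, hw₀w, hmax⟩ := Nat.sSup_mem hne hbdd
  refine ⟨w, hw, hw₀w, le_antisymm (hx w hw) (not_lt.mp fun hlt => ?_)⟩
  obtain ⟨w', hw', hww', hcard⟩ := hx.exists_signRefines_ncard_lt hd hlt
  exact (le_csSup hbdd ⟨w', hw', hw₀w.trans hww', rfl⟩).not_gt (hmax ▸ hcard)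

end InGeneralPosition

end Hyperplane

/-- Any affine classifier on N > d points in general position is equivalent,
on the points outside some d-point subset, to a unit-normal hyperplane passing through
those d points. -/
theorem stmt3 (d N : ℕ) (hdN : d < N) (x : Fin N → (Fin d → ℝ))
    (hgen : ∀ (h : Fin d → ℝ) (b : ℝ), h ≠ 0 →
      Set.ncard {i : Fin N | (∑ j, h j * x i j) + b = 0} ≤ d)
    (h : Fin d → ℝ) (b : ℝ) (hne : h ≠ 0) :
    ∃ T : Finset (Fin N), T.card = d ∧
      ∃ (h' : Fin d → ℝ) (b' : ℝ), (∑ j, (h' j) ^ 2) = 1 ∧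
        (∀ i ∈ T, (∑ j, h' j * x i j) + b' = 0) ∧
        (∀ i ∉ T, sgnR ((∑ j, h j * x i j) + b) = sgnR ((∑ j, h' j * x i j) + b')) := by
  have hx : InGeneralPosition x := fun w hw => hgen w.1 w.2 hw
  obtain ⟨w, hw, href, hcard⟩ :=
    hx.exists_signRefines_ncard_eq (by simpa using hdN) (w₀ := (h, b)) hne
  obtain ⟨c, hc, hunit⟩ := exists_pos_sum_sq_smul_eq_one hw
  have hZ : {i | affineEval x (c • w) i = 0} = {i | affineEval x w i = 0} := by
    simp [hc.ne']
  have href' : SignRefines (affineEval x (h, b)) (affineEval x (c • w)) := by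
    rw [map_smul]
    exact href.smul_of_pos hc
  refine ⟨{i | affineEval x (c • w) i = 0}.toFinset, ?_, (c • w).1, (c • w).2, hunit,
    fun i hi => (Set.mem_toFinset.mp hi :), fun i hi => ?_⟩
  · rw [← Set.ncard_eq_toFinset_card', hZ, hcard]
  · exact (sgnR_eq_of_sign_eq (href' i fun h0 => hi (Set.mem_toFinset.mpr h0))).symm
end

section
/- In the NP-hardness reduction instance built from positive integers s_1,...,s_d, suppose zero error is achieved with an affine classifier and w_{1,d+1} = 0 (the affine offset of the +1 submodel vanishes). Define Î_1 = {i ≤ d : w_1ᵀ[x_i;1] = y_i} and Î_{-1} its complement in {1,...,d}. Then w_{1,i} = 1 for i ∈ Î_1 and w_{1,i} = -1 for i ∈ Î_{-1}, and consequently w_1ᵀ[s;1] = Σ_{i∈Î_1} s_i - Σ_{i∈Î_{-1}} s_i. -/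
/-- In the reduction instance, if zero error is achieved with an affine
classifier and the offset of the +1 submodel vanishes, then w₁ has coordinates 1 on the
index set Î₁ of points it fits and -1 on the complement, so that
w₁ᵀ[s;1] = Σ_{Î₁} s_i - Σ_{Î₋₁} s_i. -/
theorem stmt14 (d : ℕ) (s : Fin d → ℤ) (hs : ∀ i, 0 < s i)
    (w1 wm1 : Fin d → ℝ) (w10 wm10 : ℝ) (hc : Fin d → ℝ) (b : ℝ)
    (hw10 : w10 = 0)
    (fit : ∀ (x : Fin d → ℝ) (y : ℝ),
        ((∃ i : Fin d, x = (fun j => if j = i then (s i : ℝ) else 0) ∧ y = (s i : ℝ)) ∨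
         (∃ i : Fin d, x = (fun j => if j = i then -(s i : ℝ) else 0) ∧ y = (s i : ℝ)) ∨
         (x = (fun j => (s j : ℝ)) ∧ y = 0) ∨
         (x = (fun j => -(s j : ℝ)) ∧ y = 0) ∨
         (x = 0 ∧ y = 0)) →
        (if 0 ≤ (∑ j, hc j * x j) + b then (∑ j, w1 j * x j) + w10
         else (∑ j, wm1 j * x j) + wm10) = y) :
    ∃ I : Finset (Fin d),
      (∀ i, i ∈ I ↔ (∑ j, w1 j * (if j = i then (s i : ℝ) else 0)) + w10 = (s i : ℝ)) ∧
      (∀ i ∈ I, w1 i = 1) ∧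
      (∀ i ∉ I, w1 i = -1) ∧
      (∑ j, w1 j * (s j : ℝ)) + w10 = (∑ i ∈ I, (s i : ℝ)) - ∑ i ∈ Iᶜ, (s i : ℝ) := by
  classical
  subst hw10
  have hspos : ∀ i : Fin d, (0:ℝ) < (s i : ℝ) := fun i => by exact_mod_cast hs i
  set I : Finset (Fin d) :=
    Finset.univ.filter
      (fun i => (∑ j, w1 j * (if j = i then (s i : ℝ) else 0)) + 0 = (s i : ℝ)) with hI
  have hmem : ∀ i, i ∈ I ↔
      (∑ j, w1 j * (if j = i then (s i : ℝ) else 0)) + 0 = (s i : ℝ) := by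
    intro i; simp [hI]
  have hsum : ∀ (i : Fin d) (v : Fin d → ℝ) (c : ℝ),
      (∑ j, v j * (if j = i then c else 0)) = v i * c := by
    intro i v c
    rw [Finset.sum_eq_single i]
    · simp
    · intro j _ hj; simp [hj]
    · simp
  -- the three fit facts
  have h0 : (if 0 ≤ b then (0:ℝ) else wm10) = 0 := by
    have := fit 0 0 (Or.inr (Or.inr (Or.inr (Or.inr ⟨rfl, rfl⟩))))
    simpa using this
  have hIone : ∀ i ∈ I, w1 i = 1 := by
    intro i hi
    rw [hmem] at hi
    rw [hsum] at hi
    have := hspos i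
    nlinarith [hi]
  have hInot : ∀ i ∉ I, w1 i = -1 := by
    intro i hi
    rw [hmem, hsum] at hi
    have hplus := fit (fun j => if j = i then (s i : ℝ) else 0) (s i) (Or.inl ⟨i, rfl, rfl⟩)
    have hminus := fit (fun j => if j = i then -(s i : ℝ) else 0) (s i)
      (Or.inr (Or.inl ⟨i, rfl, rfl⟩))
    simp only [hsum] at hplus hminus
    -- the branch at x_i must be wm1
    have hcond : ¬ (0 ≤ hc i * (s i : ℝ) + b) := by
      intro h
      rw [if_pos h] at hplus
      exact hi hplus
    rw [if_neg hcond] at hplus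
    push_neg at hcond
    -- analyze the branch at -x_i
    by_cases hcond2 : 0 ≤ hc i * (-(s i : ℝ)) + b
    · rw [if_pos hcond2] at hminus
      have := hspos i
      nlinarith [hminus]
    · rw [if_neg hcond2] at hminus
      -- then wm10 = s i > 0 but also the zero point forces contradiction
      have hwm10 : wm10 = (s i : ℝ) := by nlinarith [hplus, hminus, hspos i]
      by_cases hb : 0 ≤ b
      · exfalso
        push_neg at hcond2
        nlinarith
      · rw [if_neg hb] at h0
        exfalso
        have := hspos i
        rw [hwm10] at h0
        linarith
  refine ⟨I, hmem, hIone, hInot, ?_⟩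
  rw [← Finset.sum_add_sum_compl I (fun j => w1 j * (s j : ℝ))]
  have e1 : (∑ j ∈ I, w1 j * (s j : ℝ)) = ∑ j ∈ I, (s j : ℝ) :=
    Finset.sum_congr rfl (fun j hj => by rw [hIone j hj, one_mul])
  have e2 : (∑ j ∈ Iᶜ, w1 j * (s j : ℝ)) = ∑ j ∈ Iᶜ, -(s j : ℝ) :=
    Finset.sum_congr rfl (fun j hj => by
      rw [hInot j (Finset.mem_compl.mp hj)]; ring)
  rw [e1, e2, Finset.sum_neg_distrib]
  ring
end
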